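/- arXiv:2006.06393 — 3 statements merged into one kernel-verified Lean document; each statement's English description precedes it below -/
import Mathlib

section
/- Let g and k be two different jobs such that x_{g1} > 0 and x_{k2} > 0. If ε_r(g,k) > 0, then no column of type (∗, k̄ ; ∗, ḡ) exists in d(y,w), i.e., d(y,w) contains no column whose matching matches k to no machine of G1 and matches g to no machine of G2. -/
open Finset

noncomputable section

/-- Feasibility for system `S`. -/
def FeasibleS {J M : Type*} [Fintype J] [Fintype M]
    (G1 G2 : Finset M) (b : J → M → ℕ) (a1 a2 : J → ℕ)
    (y : J → M → ℝ) (x1 x2 : J → ℝ) (r w : ℝ) : Prop :=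
  (∀ h ∈ G1, ((∑ j, (b j h : ℝ)) - ((∑ j, (a2 j : ℝ)) - r) ≤ (∑ j, y j h)) ∧
    ((∑ j, y j h) ≤ w)) ∧
  (∀ h ∈ G2, ((∑ j, (b j h : ℝ)) - ((∑ j, (a1 j : ℝ)) - r) ≤ (∑ j, y j h)) ∧
    ((∑ j, y j h) ≤ w)) ∧
  (∀ j, (∑ h, y j h) ≤ w) ∧
  (∀ j, ∀ h, 0 ≤ y j h ∧ y j h ≤ (b j h : ℝ)) ∧
  ((∑ j, x1 j) = r) ∧ ((∑ j, x2 j) = r) ∧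
  (∀ j, x1 j + x2 j ≤ r) ∧
  (∀ j, 0 ≤ x1 j ∧ x1 j ≤ (a1 j : ℝ)) ∧
  (∀ j, 0 ≤ x2 j ∧ x2 j ≤ (a2 j : ℝ)) ∧
  (∀ j, (∑ h ∈ G1, ((b j h : ℝ) - y j h)) + (a2 j : ℝ) - x2 j ≤ (∑ j', (a2 j' : ℝ)) - r) ∧
  (∀ j, (∑ h ∈ G2, ((b j h : ℝ) - y j h)) + (a1 j : ℝ) - x1 j ≤ (∑ j', (a1 j' : ℝ)) - r)

/-- Feasibility for the linear program `ℓp` associated with an optimal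
LP-relaxation value `(rstar, wstar)`. -/
def FeasibleLP {J M : Type*} [Fintype J] [Fintype M]
    (G1 G2 : Finset M) (b : J → M → ℕ) (a1 a2 : J → ℕ)
    (rstar wstar : ℝ)
    (y : J → M → ℝ) (x1 x2 : J → ℝ) (r w : ℝ) : Prop :=
  FeasibleS G1 G2 b a1 a2 y x1 x2 r w ∧
  w - r = (⌈wstar - rstar⌉ : ℝ) ∧ ((⌊rstar⌋ : ℝ) ≤ r)

/-- The quantity `ε_r(g,k)`. -/
def epsR {J : Type*} [DecidableEq J] (B1 B2 : Finset J) (x1 x2 : J → ℝ)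
    (r ε : ℝ) (g k : J) : ℝ :=
  if hne : ((B1 ∪ B2) \ {g, k}).Nonempty then
    min (((B1 ∪ B2) \ {g, k}).inf' hne (fun j => r - (x1 j + x2 j))) ε
  else ε

/-- The slack `ε_a(g)`. -/
def epsA {J M : Type*} [Fintype J] (G2 : Finset M) (b : J → M → ℕ) (a1 : J → ℕ)
    (y : J → M → ℝ) (x1 : J → ℝ) (r : ℝ) (g : J) : ℝ :=
  (∑ h ∈ G2, y g h) -
    ((∑ h ∈ G2, (b g h : ℝ)) + (a1 g : ℝ) - x1 g - (∑ j, (a1 j : ℝ)) + r)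

/-- The slack `ε_c(k)`. -/
def epsC {J M : Type*} [Fintype J] (G1 : Finset M) (b : J → M → ℕ) (a2 : J → ℕ)
    (y : J → M → ℝ) (x2 : J → ℝ) (r : ℝ) (k : J) : ℝ :=
  (∑ h ∈ G1, y k h) -
    ((∑ h ∈ G1, (b k h : ℝ)) + (a2 k : ℝ) - x2 k - (∑ j, (a2 j : ℝ)) + r)

/-- A column matching: a matching of all machines to distinct jobs, using only
edges of the graph `G` (i.e. pairs with `y j h > 0`), and covering every
`d`-tight job (every job `j` with `∑ h, y j h = w`). -/
def IsColumn {J M : Type*} [Fintype M] (y : J → M → ℝ) (w : ℝ) (f : M → J) : Prop :=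
  Function.Injective f ∧ (∀ h, 0 < y (f h) h) ∧
  (∀ j, ((∑ h, y j h) = w) → ∃ h, f h = j)

/-- `cols` together with multiplicities `mult` is a representation `d(y,w)` of the
part (d) of the solution as a set of columns. -/
def IsColRep {J M : Type*} [Fintype J] [Fintype M] [DecidableEq J]
    (y : J → M → ℝ) (w : ℝ) (cols : Finset (M → J)) (mult : (M → J) → ℝ) : Prop :=
  (∀ f ∈ cols, IsColumn y w f ∧ 0 < mult f) ∧
  ((∑ f ∈ cols, mult f) = w) ∧
  (∀ j, ∀ h, y j h = ∑ f ∈ cols, if f h = j then mult f else 0)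

/-! Subtract a small `δ > 0` along a column of type `(∗, k̄ ; ∗, ḡ)`, and also from `x_{g1}`,
`x_{k2}`, `r` and `w`. Every constraint of `S` survives, `w - r` is unchanged, and
`⌊r*⌋ ≤ r - δ` because `δ ≤ ε_r(g,k) ≤ ε`; so `r` was not minimal. -/

open Finset Filter Topology Function

section
variable {J M : Type*} [DecidableEq J]

theorem sum_ite_comp_eq_of_injective {f : M → J} (hf : Injective f) (s : Finset M)
    (j : J) (c : ℝ) :
    ∑ h ∈ s, (if f h = j then c else 0) = if j ∈ s.image f then c else 0 := by
  rw [← sum_image (f := fun i => if i = j then c else 0) hf.injOn, sum_ite_eq']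

theorem epsR_le_right (B1 B2 : Finset J) (x1 x2 : J → ℝ) (r ε : ℝ) (g k : J) :
    epsR B1 B2 x1 x2 r ε g k ≤ ε := by
  unfold epsR
  split_ifs
  exacts [min_le_right _ _, le_rfl]

theorem epsR_le_of_mem {B1 B2 : Finset J} (x1 x2 : J → ℝ) (r ε : ℝ) {g k j : J}
    (hj : j ∈ (B1 ∪ B2) \ {g, k}) : epsR B1 B2 x1 x2 r ε g k ≤ r - (x1 j + x2 j) := by
  rw [epsR, dif_pos ⟨j, hj⟩]
  exact (min_le_left _ _).trans (inf'_le _ hj)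

theorem Int.le_of_cast_le_add {z n : ℤ} {ε : ℝ} (hε : ε < 1) (h : (z : ℝ) ≤ n + ε) : z ≤ n :=
  Int.lt_add_one_iff.1 <| by exact_mod_cast h.trans_lt (by linarith : (n : ℝ) + ε < n + 1)

/-- A job outside `B1 ∪ B2` has integral `x`, hence `x_{j1} + x_{j2} ≤ ⌊r*⌋ = r - ε`. -/
theorem add_le_sub_of_le_epsR {B1 B2 : Finset J} {x1 x2 : J → ℝ} {r ε t δ : ℝ} {g k : J}
    (hB1 : ∀ j, j ∈ B1 ↔ ¬∃ z : ℤ, x1 j = (z : ℝ))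
    (hB2 : ∀ j, j ∈ B2 ↔ ¬∃ z : ℤ, x2 j = (z : ℝ))
    (hε1 : ε < 1) (hrε : r = (⌊t⌋ : ℝ) + ε) (hxr : ∀ j, x1 j + x2 j ≤ r)
    (hδ : δ ≤ epsR B1 B2 x1 x2 r ε g k) (j : J) (hjg : j ≠ g) (hjk : j ≠ k) :
    x1 j + x2 j ≤ r - δ := by
  by_cases hB : j ∈ B1 ∪ B2
  · have := epsR_le_of_mem (g := g) (k := k) x1 x2 r ε (mem_sdiff.2 ⟨hB, by simp [hjg, hjk]⟩)
    linarith
  · obtain ⟨⟨z1, hz1⟩, ⟨z2, hz2⟩⟩ : (∃ z : ℤ, x1 j = z) ∧ ∃ z : ℤ, x2 j = z := by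
      simpa [hB1, hB2] using hB
    have hfloor : ((z1 + z2 : ℤ) : ℝ) ≤ ⌊t⌋ := Int.cast_le.2 <|
      Int.le_of_cast_le_add hε1 (by push_cast; linarith [hxr j])
    have := epsR_le_right B1 B2 x1 x2 r ε g k
    push_cast at hfloor
    linarith

variable [Fintype J] [Fintype M]

/-- Every job constraint loses `δ` on its right-hand side; the one of `k` over `G1` gets it back
from `x_{k2}` only because `f` avoids `k` on `G1` (symmetrically for `g` over `G2`). -/
theorem FeasibleS.sub_column {G1 G2 : Finset M} {b : J → M → ℕ} {a1 a2 : J → ℕ}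
    {y : J → M → ℝ} {x1 x2 : J → ℝ} {r w δ : ℝ} {f : M → J} {g k : J}
    (hS : FeasibleS G1 G2 b a1 a2 y x1 x2 r w) (hf : Injective f) (hδ : 0 ≤ δ)
    (hy : ∀ h, δ ≤ y (f h) h) (hg : δ ≤ x1 g) (hk : δ ≤ x2 k)
    (hfree : ∀ j ∉ Set.range f, ∑ h, y j h ≤ w - δ)
    (hx : ∀ j, j ≠ g → j ≠ k → x1 j + x2 j ≤ r - δ)
    (hk1 : ∀ h ∈ G1, f h ≠ k) (hg2 : ∀ h ∈ G2, f h ≠ g) :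
    FeasibleS G1 G2 b a1 a2 (fun j h => y j h - if f h = j then δ else 0)
      (x1 - Pi.single g δ) (x2 - Pi.single k δ) (r - δ) (w - δ) := by
  obtain ⟨hC1, hC2, hCj, hCy, hX1, hX2, hXr, hXa1, hXa2, hD2, hD1⟩ := hS
  have hmach (h : M) : ∑ j, (y j h - if f h = j then δ else 0) = ∑ j, y j h - δ := by
    simp [sum_sub_distrib]
  have hjob (s : Finset M) (j : J) : ∑ h ∈ s, (y j h - if f h = j then δ else 0) =
      ∑ h ∈ s, y j h - if j ∈ s.image f then δ else 0 := by
    rw [sum_sub_distrib, sum_ite_comp_eq_of_injective hf]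
  have hjob' (s : Finset M) (j : J) :
      ∑ h ∈ s, ((b j h : ℝ) - (y j h - if f h = j then δ else 0)) =
        ∑ h ∈ s, ((b j h : ℝ) - y j h) + if j ∈ s.image f then δ else 0 := by
    rw [← sum_ite_comp_eq_of_injective hf, ← sum_add_distrib]
    exact sum_congr rfl fun _ _ => by ring
  have hskip {s : Finset M} {i : J} (hs : ∀ h ∈ s, f h ≠ i) : i ∉ s.image f := by
    simpa using hs
  refine ⟨fun h hh => ?_, fun h hh => ?_, fun j => ?_, fun j h => ?_, ?_, ?_, fun j => ?_,
    fun j => ?_, fun j => ?_, fun j => ?_, fun j => ?_⟩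
  · rw [hmach]; constructor <;> linarith [hC1 h hh]
  · rw [hmach]; constructor <;> linarith [hC2 h hh]
  · rw [hjob]
    split_ifs with hj
    · linarith [hCj j]
    · simpa using hfree j (by simpa using hj)
  · dsimp only
    split_ifs with hj
    · subst hj; constructor <;> linarith [hy h, hCy (f h) h]
    · simpa using hCy j h
  · simp [sum_sub_distrib, hX1]
  · simp [sum_sub_distrib, hX2]
  · simp only [Pi.sub_apply, Pi.single_apply]
    split_ifs with hjg hjk hjk
    · linarith [hXr j]
    · linarith [hXr j]
    · linarith [hXr j]
    · simpa using hx j hjg hjk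
  · simp only [Pi.sub_apply, Pi.single_apply]
    split_ifs with hjg
    · subst hjg; constructor <;> linarith [hXa1 j]
    · simpa using hXa1 j
  · simp only [Pi.sub_apply, Pi.single_apply]
    split_ifs with hjk
    · subst hjk; constructor <;> linarith [hXa2 j]
    · simpa using hXa2 j
  · rw [hjob']
    simp only [Pi.sub_apply, Pi.single_apply]
    split_ifs with hmem hjk hjk
    · exact absurd hmem (hjk ▸ hskip hk1)
    · linarith [hD2 j]
    · linarith [hD2 j]
    · linarith [hD2 j]
  · rw [hjob']
    simp only [Pi.sub_apply, Pi.single_apply]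
    split_ifs with hmem hjg hjg
    · exact absurd hmem (hjg ▸ hskip hg2)
    · linarith [hD1 j]
    · linarith [hD1 j]
    · linarith [hD1 j]

end

theorem no_barred_column_general
    {J M : Type*} [Fintype J] [Fintype M] [DecidableEq J]
    (G1 G2 : Finset M)
    (b : J → M → ℕ) (a1 a2 : J → ℕ)
    (rstar wstar : ℝ)
    (y : J → M → ℝ) (x1 x2 : J → ℝ) (r w : ℝ)
    (hfeas : FeasibleLP G1 G2 b a1 a2 rstar wstar y x1 x2 r w)
    (hopt : ∀ y' x1' x2' r' w',
      FeasibleLP G1 G2 b a1 a2 rstar wstar y' x1' x2' r' w' → r ≤ r')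
    (ε : ℝ) (hε1 : ε < 1) (hrε : r = (⌊rstar⌋ : ℝ) + ε)
    (B1 B2 : Finset J)
    (hB1 : ∀ j, j ∈ B1 ↔ ¬∃ z : ℤ, x1 j = (z : ℝ))
    (hB2 : ∀ j, j ∈ B2 ↔ ¬∃ z : ℤ, x2 j = (z : ℝ))
    (cols : Finset (M → J)) (mult : (M → J) → ℝ)
    (hrep : IsColRep y w cols mult)
    (g k : J) (hxg : 0 < x1 g) (hxk : 0 < x2 k)
    (hepsr : 0 < epsR B1 B2 x1 x2 r ε g k) :
    ¬ ∃ f ∈ cols, (∀ h ∈ G1, f h ≠ k) ∧ (∀ h ∈ G2, f h ≠ g) := by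
  rintro ⟨f, hf, hk1, hg2⟩
  obtain ⟨⟨hfinj, hfpos, hftight⟩, -⟩ := hrep.1 f hf
  obtain ⟨hS, hwr, hfloor⟩ := hfeas
  have hjob_le : ∀ j, ∑ h, y j h ≤ w := hS.2.2.1
  have hxr : ∀ j, x1 j + x2 j ≤ r := hS.2.2.2.2.2.2.1
  have small {c : ℝ} (hc : 0 < c) : ∀ᶠ δ in 𝓝[>] (0 : ℝ), δ ≤ c :=
    nhdsWithin_le_nhds (eventually_le_nhds hc)
  have hfree (j : J) : ∀ᶠ δ in 𝓝[>] (0 : ℝ), j ∉ Set.range f → ∑ h, y j h ≤ w - δ := by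
    by_cases hj : j ∈ Set.range f
    · exact .of_forall fun _ hj' => absurd hj hj'
    · have hslack : ∑ h, y j h < w := (hjob_le j).lt_of_ne fun htight => hj (hftight j htight)
      filter_upwards [small (sub_pos.2 hslack)] with δ hδ _
      linarith
  obtain ⟨δ, hδ, hδε, hδy, hδg, hδk, hδfree⟩ : ∃ δ : ℝ, 0 < δ ∧
      δ ≤ epsR B1 B2 x1 x2 r ε g k ∧ (∀ h, δ ≤ y (f h) h) ∧ δ ≤ x1 g ∧ δ ≤ x2 k ∧
      ∀ j ∉ Set.range f, ∑ h, y j h ≤ w - δ := by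
    refine Eventually.exists (f := 𝓝[>] (0 : ℝ)) ?_
    filter_upwards [self_mem_nhdsWithin, small hepsr, eventually_all.2 fun h => small (hfpos h),
      small hxg, small hxk, eventually_all.2 hfree] with δ h1 h2 h3 h4 h5 h6
      using ⟨h1, h2, h3, h4, h5, h6⟩
  have hx := add_le_sub_of_le_epsR hB1 hB2 hε1 hrε hxr hδε
  have := hopt _ _ _ _ _ ⟨hS.sub_column hfinj hδ.le hδy hδg hδk hδfree hx hk1 hg2,
    by rw [← hwr]; ring, by linarith [epsR_le_right B1 B2 x1 x2 r ε g k]⟩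
  linarith

theorem no_barred_column
    {J M : Type*} [Fintype J] [Fintype M] [DecidableEq J] [DecidableEq M]
    (G1 G2 : Finset M) (hG1ne : G1.Nonempty) (hG2ne : G2.Nonempty)
    (hdisj : Disjoint G1 G2) (hcover : G1 ∪ G2 = Finset.univ)
    (b : J → M → ℕ) (a1 a2 : J → ℕ)
    (ystar : J → M → ℝ) (x1star x2star : J → ℝ) (rstar wstar : ℝ)
    (hstar : FeasibleS G1 G2 b a1 a2 ystar x1star x2star rstar wstar)
    (hstaropt : ∀ y' x1' x2' r' w', FeasibleS G1 G2 b a1 a2 y' x1' x2' r' w' →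
      wstar - rstar ≤ w' - r')
    (y : J → M → ℝ) (x1 x2 : J → ℝ) (r w : ℝ)
    (hfeas : FeasibleLP G1 G2 b a1 a2 rstar wstar y x1 x2 r w)
    (hopt : ∀ y' x1' x2' r' w',
      FeasibleLP G1 G2 b a1 a2 rstar wstar y' x1' x2' r' w' → r ≤ r')
    (ε : ℝ) (hε0 : 0 < ε) (hε1 : ε < 1) (hrε : r = (⌊rstar⌋ : ℝ) + ε)
    (B1 B2 : Finset J)
    (hB1 : ∀ j, j ∈ B1 ↔ ¬∃ z : ℤ, x1 j = (z : ℝ))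
    (hB2 : ∀ j, j ∈ B2 ↔ ¬∃ z : ℤ, x2 j = (z : ℝ))
    (cols : Finset (M → J)) (mult : (M → J) → ℝ)
    (hrep : IsColRep y w cols mult)
    (g k : J) (hgk : g ≠ k) (hxg : 0 < x1 g) (hxk : 0 < x2 k)
    (hepsr : 0 < epsR B1 B2 x1 x2 r ε g k) :
    ¬ ∃ f ∈ cols, (∀ h ∈ G1, f h ≠ k) ∧ (∀ h ∈ G2, f h ≠ g) :=
  no_barred_column_general G1 G2 b a1 a2 rstar wstar y x1 x2 r w hfeas hopt ε hε1 hrε B1 B2 hB1 hB2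
    cols mult hrep g k hxg hxk hepsr
end
end

section
/- Let g, k, and a be three different jobs such that x_{g1} > 0, x_{k2} > 0, and x_{a1}·x_{a2} > 0. If ε_r(g,a) > 0 and ε_r(a,k) > 0, then a column of type (∗, a, g, k ; ∗) does not exist in d(y,w) or a column of type (∗ ; ∗, a, k, g) does not exist in d(y,w). -/
open Finset

noncomputable section

/-! If both columns existed, lower `y` by `δ / 2` along each of them, `x1` at `ja` and `g` and
`x2` at `ja` and `k` by `δ / 2`, and `r` and `w` by `δ`. For small `δ > 0` this stays feasible for
`ℓp`: the first column carries `ja, g` on `G1` and the second carries `ja, k` on `G2`, which exactly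
compensates the decrease of `x1` and `x2` in the last two constraints of `S`; and `ε_r > 0`,
together with the fractional part `ε` of `r`, leaves slack in `x1 j + x2 j ≤ r` for every
`j ≠ ja`. This contradicts the minimality of `r`. -/

open Filter Topology

section Slack

variable {J : Type*} [DecidableEq J]

lemma epsR_le_sub {B1 B2 : Finset J} {x1 x2 : J → ℝ} {r ε : ℝ} {g k j : J}
    (hj : j ∈ (B1 ∪ B2) \ {g, k}) : epsR B1 B2 x1 x2 r ε g k ≤ r - (x1 j + x2 j) := by
  rw [epsR, dif_pos ⟨j, hj⟩]
  exact (min_le_left _ _).trans (inf'_le _ hj)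

lemma int_lt_of_le_int_add {z n : ℤ} {ε : ℝ} (hε0 : 0 < ε) (hε1 : ε < 1)
    (hz : (z : ℝ) ≤ n + ε) : (z : ℝ) < n + ε := by
  have hlt : (z : ℝ) < n + 1 := by linarith
  have hle : (z : ℝ) ≤ n := by exact_mod_cast Int.lt_add_one_iff.1 (by exact_mod_cast hlt)
  linarith

/-- Outside `B1 ∪ B2`, `x1 j + x2 j` is an integer `≤ r`, hence `≤ ⌊r⌋ < r`. -/
lemma sub_pos_of_epsR_pos {B1 B2 : Finset J} {x1 x2 : J → ℝ} {r ε : ℝ} {n : ℤ} {g k j : J}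
    (hB1 : ∀ j, j ∈ B1 ↔ ¬∃ z : ℤ, x1 j = (z : ℝ))
    (hB2 : ∀ j, j ∈ B2 ↔ ¬∃ z : ℤ, x2 j = (z : ℝ))
    (hr : r = n + ε) (hε0 : 0 < ε) (hε1 : ε < 1)
    (he : 0 < epsR B1 B2 x1 x2 r ε g k) (hj : j ∉ ({g, k} : Finset J))
    (hjr : x1 j + x2 j ≤ r) : 0 < r - (x1 j + x2 j) := by
  by_cases hjB : j ∈ B1 ∪ B2
  · exact he.trans_le (epsR_le_sub (mem_sdiff.2 ⟨hjB, hj⟩))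
  · obtain ⟨⟨z1, hz1⟩, z2, hz2⟩ : (∃ z : ℤ, x1 j = z) ∧ ∃ z : ℤ, x2 j = z := by
      simpa [hB1, hB2, not_or] using hjB
    have := int_lt_of_le_int_add (z := z1 + z2) (n := n) hε0 hε1 (by push_cast; linarith)
    push_cast at this
    linarith

end Slack

section Columns

variable {J M : Type*} [DecidableEq J] {f : M → J} {S T : Finset M} {j : J}

lemma card_filter_apply_eq_le_one (hf : Function.Injective f) (S : Finset M) (j : J) :
    #{h ∈ S | f h = j} ≤ 1 :=
  card_le_one.2 fun _ h₁ _ h₂ => hf ((mem_filter.1 h₁).2.trans (mem_filter.1 h₂).2.symm)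

lemma card_filter_apply_eq_eq_one (hf : Function.Injective f) {h₀ : M} (h₀S : h₀ ∈ S)
    (hfh₀ : f h₀ = j) : #{h ∈ S | f h = j} = 1 := by
  rw [card_eq_one]
  refine ⟨h₀, eq_singleton_iff_unique_mem.2 ⟨mem_filter.2 ⟨h₀S, hfh₀⟩, fun h hh => ?_⟩⟩
  exact hf ((mem_filter.1 hh).2.trans hfh₀.symm)

lemma card_filter_apply_eq_eq_zero (hf : Function.Injective f) (hST : Disjoint S T)
    (hj : ∃ h ∈ T, f h = j) : #{h ∈ S | f h = j} = 0 := by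
  obtain ⟨h₀, h₀T, hfh₀⟩ := hj
  rw [card_eq_zero, filter_eq_empty_iff]
  intro h hS hfh
  exact disjoint_left.1 hST hS (hf (hfh.trans hfh₀.symm) ▸ h₀T)

end Columns

section PairWeight

variable {α : Type*} [DecidableEq α] {δ : ℝ} {a b j : α}

/-- Weight `δ / 2` at `a` and at `b` (so `δ` at `a` when `a = b`). -/
def pairWeight (δ : ℝ) (a b : α) (j : α) : ℝ :=
  δ / 2 * ((if a = j then 1 else 0) + (if b = j then 1 else 0))

lemma pairWeight_comm (δ : ℝ) (a b : α) : pairWeight δ a b = pairWeight δ b a := by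
  ext j
  simp only [pairWeight, add_comm]

lemma pairWeight_nonneg (hδ : 0 ≤ δ) (a b j : α) : 0 ≤ pairWeight δ a b j := by
  unfold pairWeight
  split_ifs <;> linarith

lemma pairWeight_left (hab : a ≠ b) : pairWeight δ a b a = δ / 2 := by
  simp [pairWeight, hab.symm]

lemma pairWeight_le_of_le {v : α → ℝ} (ha : δ ≤ v a) (hb : δ ≤ v b) (hj : 0 ≤ v j) :
    pairWeight δ a b j ≤ v j := by
  unfold pairWeight
  split_ifs with h₁ h₂ h₂ <;> subst_vars <;> linarith

lemma sum_pairWeight [Fintype α] (δ : ℝ) (a b : α) : ∑ j, pairWeight δ a b j = δ := by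
  simp only [pairWeight, ← mul_sum, sum_add_distrib, sum_ite_eq, mem_univ, if_true]
  ring

lemma sum_pairWeight_apply {M : Type*} (f₁ f₂ : M → α) (S : Finset M) (j : α) :
    ∑ h ∈ S, pairWeight δ (f₁ h) (f₂ h) j =
      δ / 2 * (#{h ∈ S | f₁ h = j} + #{h ∈ S | f₂ h = j}) := by
  simp only [pairWeight, ← mul_sum, sum_add_distrib, sum_boole]

lemma sum_pairWeight_add_pairWeight_le {M : Type*} {f₁ f₂ : M → α} {S T : Finset M}
    (hf₁ : Function.Injective f₁) (hf₂ : Function.Injective f₂) (hST : Disjoint S T)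
    (hab : a ≠ b) (ha : ∃ h ∈ T, f₂ h = a) (hb : ∃ h ∈ T, f₂ h = b) (hδ : 0 ≤ δ) (j : α) :
    ∑ h ∈ S, pairWeight δ (f₁ h) (f₂ h) j + pairWeight δ a b j ≤ δ := by
  rw [sum_pairWeight_apply]
  have h₁ : (#{h ∈ S | f₁ h = j} : ℝ) ≤ 1 := by
    exact_mod_cast card_filter_apply_eq_le_one hf₁ S j
  have h₂ : (#{h ∈ S | f₂ h = j} : ℝ) ≤ 1 := by
    exact_mod_cast card_filter_apply_eq_le_one hf₂ S j
  by_cases hja : a = j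
  · subst hja
    rw [card_filter_apply_eq_eq_zero hf₂ hST ha, pairWeight_left hab]
    push_cast
    nlinarith
  by_cases hjb : b = j
  · subst hjb
    rw [card_filter_apply_eq_eq_zero hf₂ hST hb, pairWeight_comm, pairWeight_left hab.symm]
    push_cast
    nlinarith
  · simp only [pairWeight, if_neg hja, if_neg hjb]
    nlinarith

end PairWeight

section Shift

variable {J M : Type*} [Fintype J] [Fintype M] {G1 G2 : Finset M} {b : J → M → ℕ}
  {a1 a2 : J → ℕ} {y : J → M → ℝ} {x1 x2 : J → ℝ} {r w : ℝ}

lemma FeasibleS.sub (hS : FeasibleS G1 G2 b a1 a2 y x1 x2 r w) {p : J → M → ℝ}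
    {u1 u2 : J → ℝ} {δ : ℝ} (hp : ∀ h, ∑ j, p j h = δ)
    (hpy : ∀ j h, 0 ≤ p j h ∧ p j h ≤ y j h) (hload : ∀ j, ∑ h, y j h - ∑ h, p j h ≤ w - δ)
    (hu1 : ∑ j, u1 j = δ) (hu2 : ∑ j, u2 j = δ)
    (hux1 : ∀ j, 0 ≤ u1 j ∧ u1 j ≤ x1 j) (hux2 : ∀ j, 0 ≤ u2 j ∧ u2 j ≤ x2 j)
    (hpair : ∀ j, x1 j + x2 j - (u1 j + u2 j) ≤ r - δ)
    (hG1 : ∀ j, ∑ h ∈ G1, p j h + u2 j ≤ δ) (hG2 : ∀ j, ∑ h ∈ G2, p j h + u1 j ≤ δ) :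
    FeasibleS G1 G2 b a1 a2 (y - p) (x1 - u1) (x2 - u2) (r - δ) (w - δ) := by
  obtain ⟨hM1, hM2, hJ, hy, hx1, hx2, hx12, hx1b, hx2b, hc1, hc2⟩ := hS
  have hcol (h : M) : ∑ j, (y - p) j h = ∑ j, y j h - δ := by
    simp [sum_sub_distrib, hp]
  have hrow (S : Finset M) (j : J) : ∑ h ∈ S, ((b j h : ℝ) - (y - p) j h) =
      ∑ h ∈ S, ((b j h : ℝ) - y j h) + ∑ h ∈ S, p j h := by
    simp only [Pi.sub_apply, ← sum_add_distrib]
    exact sum_congr rfl fun _ _ => by ring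
  refine ⟨fun h hh => ?_, fun h hh => ?_, fun j => ?_, fun j h => ?_, ?_, ?_, fun j => ?_,
    fun j => ?_, fun j => ?_, fun j => ?_, fun j => ?_⟩
  · obtain ⟨hlo, hhi⟩ := hM1 h hh
    rw [hcol]
    constructor <;> linarith
  · obtain ⟨hlo, hhi⟩ := hM2 h hh
    rw [hcol]
    constructor <;> linarith
  · simpa [sum_sub_distrib] using hload j
  · obtain ⟨hp0, hpy⟩ := hpy j h
    obtain ⟨hy0, hyb⟩ := hy j h
    simp only [Pi.sub_apply]
    constructor <;> linarith
  · simp [sum_sub_distrib, hx1, hu1]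
  · simp [sum_sub_distrib, hx2, hu2]
  · simp only [Pi.sub_apply]
    linarith [hpair j]
  · simp only [Pi.sub_apply]
    constructor <;> linarith [hux1 j, hx1b j]
  · simp only [Pi.sub_apply]
    constructor <;> linarith [hux2 j, hx2b j]
  · rw [hrow]
    simp only [Pi.sub_apply]
    linarith [hc1 j, hG1 j]
  · rw [hrow]
    simp only [Pi.sub_apply]
    linarith [hc2 j, hG2 j]

end Shift

section ColumnShift

variable {J M : Type*} [Fintype M] [DecidableEq J] {y : J → M → ℝ} {w : ℝ}

lemma sum_sub_sum_pairWeight_le {f1 f2 : M → J} (hf1 : IsColumn y w f1)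
    (hf2 : IsColumn y w f2) {δ : ℝ} (hδ : 0 ≤ δ)
    (hδw : ∀ j, ∑ h, y j h ≠ w → δ ≤ w - ∑ h, y j h) (j : J) :
    ∑ h, y j h - ∑ h, pairWeight δ (f1 h) (f2 h) j ≤ w - δ := by
  by_cases htight : ∑ h, y j h = w
  · obtain ⟨h₁, hh₁⟩ := hf1.2.2 j htight
    obtain ⟨h₂, hh₂⟩ := hf2.2.2 j htight
    rw [sum_pairWeight_apply, card_filter_apply_eq_eq_one hf1.1 (mem_univ h₁) hh₁,
      card_filter_apply_eq_eq_one hf2.1 (mem_univ h₂) hh₂]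
    push_cast
    linarith
  · have := sum_nonneg fun h (_ : h ∈ univ) => pairWeight_nonneg hδ (f1 h) (f2 h) j
    linarith [hδw j htight]

variable [Fintype J] {G1 G2 : Finset M} {b : J → M → ℕ} {a1 a2 : J → ℕ} {rstar wstar : ℝ}
  {x1 x2 : J → ℝ} {r : ℝ}

lemma FeasibleLP.sub_columns (hfeas : FeasibleLP G1 G2 b a1 a2 rstar wstar y x1 x2 r w)
    (hdisj : Disjoint G1 G2) {f1 f2 : M → J} (hf1 : IsColumn y w f1) (hf2 : IsColumn y w f2)
    {g k ja : J} (hgja : g ≠ ja) (hkja : k ≠ ja)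
    (hja1 : ∃ h ∈ G1, f1 h = ja) (hg1 : ∃ h ∈ G1, f1 h = g)
    (hja2 : ∃ h ∈ G2, f2 h = ja) (hk2 : ∃ h ∈ G2, f2 h = k)
    {δ : ℝ} (hδ : 0 ≤ δ) (hδr : δ ≤ r - ⌊rstar⌋) (hδy : ∀ h, δ ≤ y (f1 h) h ∧ δ ≤ y (f2 h) h)
    (hδw : ∀ j, ∑ h, y j h ≠ w → δ ≤ w - ∑ h, y j h)
    (hδx1 : δ ≤ x1 ja ∧ δ ≤ x1 g) (hδx2 : δ ≤ x2 ja ∧ δ ≤ x2 k)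
    (hδslack : ∀ j ≠ ja, δ ≤ r - (x1 j + x2 j)) :
    FeasibleLP G1 G2 b a1 a2 rstar wstar (y - fun j h => pairWeight δ (f1 h) (f2 h) j)
      (x1 - pairWeight δ ja g) (x2 - pairWeight δ ja k) (r - δ) (w - δ) := by
  obtain ⟨hS, hwr, hr⟩ := hfeas
  have ⟨_, _, _, hy, _, _, hx12, hx1, hx2, _, _⟩ := hS
  have hpair (j : J) :
      x1 j + x2 j - (pairWeight δ ja g j + pairWeight δ ja k j) ≤ r - δ := by
    by_cases hj : j = ja
    · subst hj
      rw [pairWeight_left hgja.symm, pairWeight_left hkja.symm]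
      linarith [hx12 j]
    · linarith [pairWeight_nonneg hδ ja g j, pairWeight_nonneg hδ ja k j, hδslack j hj]
  refine ⟨hS.sub (fun h => sum_pairWeight δ _ _)
    (fun j h => ⟨pairWeight_nonneg hδ _ _ _,
      pairWeight_le_of_le (v := (y · h)) (hδy h).1 (hδy h).2 (hy j h).1⟩)
    (sum_sub_sum_pairWeight_le hf1 hf2 hδ hδw) (sum_pairWeight δ _ _) (sum_pairWeight δ _ _)
    (fun j => ⟨pairWeight_nonneg hδ _ _ _, pairWeight_le_of_le hδx1.1 hδx1.2 (hx1 j).1⟩)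
    (fun j => ⟨pairWeight_nonneg hδ _ _ _, pairWeight_le_of_le hδx2.1 hδx2.2 (hx2 j).1⟩) hpair
    (sum_pairWeight_add_pairWeight_le hf1.1 hf2.1 hdisj hkja.symm hja2 hk2 hδ)
    fun j => ?_, by linarith, by linarith⟩
  simpa only [pairWeight_comm δ (f2 _)] using
    sum_pairWeight_add_pairWeight_le hf2.1 hf1.1 hdisj.symm hgja.symm hja1 hg1 hδ j

lemma exists_feasibleLP_sub_of_columns
    (hfeas : FeasibleLP G1 G2 b a1 a2 rstar wstar y x1 x2 r w)
    (hdisj : Disjoint G1 G2) {f1 f2 : M → J} (hf1 : IsColumn y w f1) (hf2 : IsColumn y w f2)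
    {g k ja : J} (hgja : g ≠ ja) (hkja : k ≠ ja)
    (hja1 : ∃ h ∈ G1, f1 h = ja) (hg1 : ∃ h ∈ G1, f1 h = g)
    (hja2 : ∃ h ∈ G2, f2 h = ja) (hk2 : ∃ h ∈ G2, f2 h = k)
    (hr : ⌊rstar⌋ < r) (hx1 : 0 < x1 ja ∧ 0 < x1 g) (hx2 : 0 < x2 ja ∧ 0 < x2 k)
    (hslack : ∀ j ≠ ja, 0 < r - (x1 j + x2 j)) :
    ∃ δ > 0, ∃ y' x1' x2', FeasibleLP G1 G2 b a1 a2 rstar wstar y' x1' x2' (r - δ) (w - δ) := by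
  have hsmall {c : ℝ} (hc : 0 < c) : ∀ᶠ δ in 𝓝[>] (0 : ℝ), δ ≤ c :=
    nhdsWithin_le_nhds (eventually_le_nhds hc)
  have hJ := hfeas.1.2.2.1
  have hδ : ∀ᶠ δ in 𝓝[>] (0 : ℝ), 0 < δ ∧
      FeasibleLP G1 G2 b a1 a2 rstar wstar (y - fun j h => pairWeight δ (f1 h) (f2 h) j)
        (x1 - pairWeight δ ja g) (x2 - pairWeight δ ja k) (r - δ) (w - δ) := by
    filter_upwards [eventually_mem_nhdsWithin, hsmall (sub_pos.2 hr),
      eventually_all.2 fun h => (hsmall (hf1.2.1 h)).and (hsmall (hf2.2.1 h)),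
      eventually_all.2 fun j => eventually_imp_distrib_left.2 fun hj =>
        hsmall (sub_pos.2 ((hJ j).lt_of_ne hj)),
      (hsmall hx1.1).and (hsmall hx1.2), (hsmall hx2.1).and (hsmall hx2.2),
      eventually_all.2 fun j => eventually_imp_distrib_left.2 fun hj => hsmall (hslack j hj)]
      with δ hδ hδr hδy hδw hδx1 hδx2 hδslack
    exact ⟨hδ, hfeas.sub_columns hdisj hf1 hf2 hgja hkja hja1 hg1 hja2 hk2 (le_of_lt hδ) hδr
      hδy hδw hδx1 hδx2 hδslack⟩
  obtain ⟨δ, hδpos, hδfeas⟩ := hδ.exists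
  exact ⟨δ, hδpos, _, _, _, hδfeas⟩

end ColumnShift

theorem no_pair_of_full_columns_three_jobs_general
    {J M : Type*} [Fintype J] [Fintype M] [DecidableEq J]
    (G1 G2 : Finset M) (hdisj : Disjoint G1 G2)
    (b : J → M → ℕ) (a1 a2 : J → ℕ) (rstar wstar : ℝ)
    (y : J → M → ℝ) (x1 x2 : J → ℝ) (r w : ℝ)
    (hfeas : FeasibleLP G1 G2 b a1 a2 rstar wstar y x1 x2 r w)
    (hopt : ∀ y' x1' x2' r' w',
      FeasibleLP G1 G2 b a1 a2 rstar wstar y' x1' x2' r' w' → r ≤ r')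
    (ε : ℝ) (hε0 : 0 < ε) (hε1 : ε < 1) (hrε : r = (⌊rstar⌋ : ℝ) + ε)
    (B1 B2 : Finset J)
    (hB1 : ∀ j, j ∈ B1 ↔ ¬∃ z : ℤ, x1 j = (z : ℝ))
    (hB2 : ∀ j, j ∈ B2 ↔ ¬∃ z : ℤ, x2 j = (z : ℝ))
    (cols : Finset (M → J)) (mult : (M → J) → ℝ)
    (hrep : IsColRep y w cols mult)
    (g k ja : J)
    (hgk : g ≠ k) (hgja : g ≠ ja) (hkja : k ≠ ja)
    (hxg : 0 < x1 g) (hxk : 0 < x2 k) (hxa : 0 < x1 ja * x2 ja)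
    (he1 : 0 < epsR B1 B2 x1 x2 r ε g ja)
    (he2 : 0 < epsR B1 B2 x1 x2 r ε ja k) :
    (¬ ∃ f ∈ cols, (∃ h ∈ G1, f h = ja) ∧ (∃ h ∈ G1, f h = g) ∧
        (∃ h ∈ G1, f h = k)) ∨
    (¬ ∃ f ∈ cols, (∃ h ∈ G2, f h = ja) ∧ (∃ h ∈ G2, f h = k) ∧
        (∃ h ∈ G2, f h = g)) := by
  by_contra! hcon
  obtain ⟨⟨f1, hf1, hja1, hg1, -⟩, f2, hf2, hja2, hk2, -⟩ := hcon
  have ⟨_, _, _, _, _, _, hx12, hx1, hx2, _, _⟩ := hfeas.1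
  have hslack (j : J) (hj : j ≠ ja) : 0 < r - (x1 j + x2 j) := by
    by_cases hjg : j = g
    · subst hjg
      exact sub_pos_of_epsR_pos hB1 hB2 hrε hε0 hε1 he2 (by simp [hgja, hgk]) (hx12 j)
    · exact sub_pos_of_epsR_pos hB1 hB2 hrε hε0 hε1 he1 (by simp [hjg, hj]) (hx12 j)
  have hxa1 : 0 < x1 ja := (hx1 ja).1.lt_of_ne' (left_ne_zero_of_mul hxa.ne')
  have hxa2 : 0 < x2 ja := (hx2 ja).1.lt_of_ne' (right_ne_zero_of_mul hxa.ne')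
  obtain ⟨δ, hδ, y', x1', x2', hfeas'⟩ := exists_feasibleLP_sub_of_columns hfeas hdisj
    (hrep.1 f1 hf1).1 (hrep.1 f2 hf2).1 hgja hkja hja1 hg1 hja2 hk2 (by linarith)
    ⟨hxa1, hxg⟩ ⟨hxa2, hxk⟩ hslack
  linarith [hopt _ _ _ _ _ hfeas']

theorem no_pair_of_full_columns_three_jobs
    {J M : Type*} [Fintype J] [Fintype M] [DecidableEq J] [DecidableEq M]
    (G1 G2 : Finset M) (hG1ne : G1.Nonempty) (hG2ne : G2.Nonempty)
    (hdisj : Disjoint G1 G2) (hcover : G1 ∪ G2 = Finset.univ)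
    (b : J → M → ℕ) (a1 a2 : J → ℕ)
    (ystar : J → M → ℝ) (x1star x2star : J → ℝ) (rstar wstar : ℝ)
    (hstar : FeasibleS G1 G2 b a1 a2 ystar x1star x2star rstar wstar)
    (hstaropt : ∀ y' x1' x2' r' w', FeasibleS G1 G2 b a1 a2 y' x1' x2' r' w' →
      wstar - rstar ≤ w' - r')
    (y : J → M → ℝ) (x1 x2 : J → ℝ) (r w : ℝ)
    (hfeas : FeasibleLP G1 G2 b a1 a2 rstar wstar y x1 x2 r w)
    (hopt : ∀ y' x1' x2' r' w',
      FeasibleLP G1 G2 b a1 a2 rstar wstar y' x1' x2' r' w' → r ≤ r')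
    (ε : ℝ) (hε0 : 0 < ε) (hε1 : ε < 1) (hrε : r = (⌊rstar⌋ : ℝ) + ε)
    (B1 B2 : Finset J)
    (hB1 : ∀ j, j ∈ B1 ↔ ¬∃ z : ℤ, x1 j = (z : ℝ))
    (hB2 : ∀ j, j ∈ B2 ↔ ¬∃ z : ℤ, x2 j = (z : ℝ))
    (cols : Finset (M → J)) (mult : (M → J) → ℝ)
    (hrep : IsColRep y w cols mult)
    (g k ja : J)
    (hgk : g ≠ k) (hgja : g ≠ ja) (hkja : k ≠ ja)
    (hxg : 0 < x1 g) (hxk : 0 < x2 k) (hxa : 0 < x1 ja * x2 ja)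
    (he1 : 0 < epsR B1 B2 x1 x2 r ε g ja)
    (he2 : 0 < epsR B1 B2 x1 x2 r ε ja k) :
    (¬ ∃ f ∈ cols, (∃ h ∈ G1, f h = ja) ∧ (∃ h ∈ G1, f h = g) ∧
        (∃ h ∈ G1, f h = k)) ∨
    (¬ ∃ f ∈ cols, (∃ h ∈ G2, f h = ja) ∧ (∃ h ∈ G2, f h = k) ∧
        (∃ h ∈ G2, f h = g)) :=
  no_pair_of_full_columns_three_jobs_general G1 G2 hdisj b a1 a2 rstar wstar y x1 x2 r w hfeas hopt
    ε hε0 hε1 hrε B1 B2 hB1 hB2 cols mult hrep g k ja hgk hgja hkja hxg hxk hxa he1 he2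
end
end

section
/- Let g and k be two different jobs such that x_{g1}·x_{g2} > 0 and x_{k1}·x_{k2} > 0. If ε_r(g,k) > 0, then a column of type (∗, g, k ; ∗) does not exist in d(y,w) or a column of type (∗ ; ∗, k, g) does not exist in d(y,w). -/
open Finset

noncomputable section

/-!
Suppose both columns exist. Remove `δ` units of each from `d(y,w)`, lower `w` and `r` by `2δ`
and lower `x_{g1}, x_{g2}, x_{k1}, x_{k2}` by `δ`. Every machine loses exactly `2δ` and `w - r`
is unchanged. In the constraint `∑_{h ∈ G1} (b_{jh} - y_{jh}) + a_{j2} - x_{j2} ≤ Δ(G2) - r`,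
whose right side grows by `2δ`, the left side grows by at most `2δ`: for `j = g, k` the second
column meets `j` only on `G2`, so only the first column and the lowered `x_{j2}` contribute;
symmetrically for `G2`. For small `δ > 0` all bounds survive (`y` is positive along the columns,
the `x`'s of `g` and `k` are positive, tight jobs lie in both columns, and `ε_r(g,k) > 0` leaves
room in `x_{j1} + x_{j2} ≤ r` for every other job), contradicting the minimality of `r` in `ℓp`.
-/

open Function Filter Topology

section ColumnIndicator

variable {J M : Type*} [DecidableEq J]

/-- The contribution of the column `f` with multiplicity `δ` to `y`. -/
def columnIndicator (f : M → J) (δ : ℝ) (j : J) (h : M) : ℝ :=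
  if f h = j then δ else 0

lemma sum_columnIndicator_jobs [Fintype J] (f : M → J) (δ : ℝ) (h : M) :
    ∑ j, columnIndicator f δ j h = δ := by
  simp [columnIndicator]

lemma sum_columnIndicator_machines {f : M → J} (hf : Injective f) (δ : ℝ) (G : Finset M)
    (j : J) : ∑ h ∈ G, columnIndicator f δ j h = if j ∈ G.image f then δ else 0 := by
  rw [← sum_ite_eq' (G.image f) j (fun _ => δ), sum_image hf.injOn]
  rfl

lemma sum_sub_two_columnIndicator_jobs [Fintype J] (y : J → M → ℝ) (f₁ f₂ : M → J) (δ : ℝ)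
    (h : M) : ∑ j, (y - columnIndicator f₁ δ - columnIndicator f₂ δ) j h = ∑ j, y j h - 2 * δ := by
  simp only [Pi.sub_apply, sum_sub_distrib, sum_columnIndicator_jobs]
  ring

lemma sum_sub_two_columnIndicator_machines (y : J → M → ℝ) {f₁ f₂ : M → J} (hf₁ : Injective f₁)
    (hf₂ : Injective f₂) (δ : ℝ) (G : Finset M) (j : J) :
    ∑ h ∈ G, (y - columnIndicator f₁ δ - columnIndicator f₂ δ) j h =
      ∑ h ∈ G, y j h - (if j ∈ G.image f₁ then δ else 0) - (if j ∈ G.image f₂ then δ else 0) := by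
  simp only [Pi.sub_apply, sum_sub_distrib, sum_columnIndicator_machines hf₁,
    sum_columnIndicator_machines hf₂]

end ColumnIndicator

lemma single_add_single_apply {J : Type*} [DecidableEq J] {g k : J} (hgk : g ≠ k) (δ : ℝ)
    (j : J) : (Pi.single g δ + Pi.single k δ : J → ℝ) j = if j = g ∨ j = k then δ else 0 := by
  rcases eq_or_ne j g with rfl | hjg
  · simp [hgk]
  · rcases eq_or_ne j k with rfl | hjk <;> simp [*]

lemma sum_sub_single_add_single {J : Type*} [Fintype J] [DecidableEq J] (x : J → ℝ) (g k : J)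
    (δ : ℝ) : ∑ j, (x - (Pi.single g δ + Pi.single k δ) : J → ℝ) j = ∑ j, x j - 2 * δ := by
  simp only [Pi.sub_apply, Pi.add_apply, sum_sub_distrib, sum_add_distrib, sum_pi_single',
    mem_univ, if_true]
  ring

lemma ite_mem_add_single_add_single_le {J : Type*} [DecidableEq J] {s : Finset J} {g k : J}
    (hg : g ∉ s) (hk : k ∉ s) (hgk : g ≠ k) {δ : ℝ} (hδ : 0 ≤ δ) (j : J) :
    (if j ∈ s then δ else 0) + (Pi.single g δ + Pi.single k δ : J → ℝ) j ≤ δ := by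
  rw [single_add_single_apply hgk]
  split_ifs with hjs hj hj
  · rcases hj with rfl | rfl <;> contradiction
  all_goals linarith

lemma notMem_image_of_mem_image_of_disjoint {J M : Type*} [DecidableEq J] {f : M → J}
    (hf : Injective f) {s t : Finset M} (hst : Disjoint s t) {j : J} (hj : j ∈ t.image f) :
    j ∉ s.image f :=
  disjoint_right.mp ((disjoint_image hf).mpr hst) hj

lemma sub_single_add_single_mem_Icc {J : Type*} [DecidableEq J] {g k : J} (hgk : g ≠ k)
    {δ : ℝ} {x : J → ℝ} (hx : ∀ j, 0 ≤ x j) (hg : δ ≤ x g) (hk : δ ≤ x k) (hδ : 0 ≤ δ) (j : J) :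
    (x - (Pi.single g δ + Pi.single k δ) : J → ℝ) j ∈ Set.Icc 0 (x j) := by
  rw [Pi.sub_apply, single_add_single_apply hgk, Set.mem_Icc]
  split_ifs with hj
  · rcases hj with rfl | rfl <;> constructor <;> linarith
  · simp [hx j]

lemma eventually_nhdsGT_two_mul_le {c : ℝ} (hc : 0 < c) : ∀ᶠ δ in 𝓝[>] (0 : ℝ), 2 * δ ≤ c :=
  nhdsWithin_le_nhds <|
    ((continuous_const.mul continuous_id).tendsto' 0 0 (by simp)).eventually (eventually_le_nhds hc)

section Perturbation

variable {J M : Type*} [Fintype J] [Fintype M] [DecidableEq J]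
  {G1 G2 : Finset M} {b : J → M → ℕ} {a1 a2 : J → ℕ}
  {y : J → M → ℝ} {x1 x2 : J → ℝ} {r w : ℝ}

theorem FeasibleS.sub_two_columns (hS : FeasibleS G1 G2 b a1 a2 y x1 x2 r w)
    (hdisj : Disjoint G1 G2) {f₁ f₂ : M → J} (hf₁ : Injective f₁) (hf₂ : Injective f₂)
    {g k : J} (hgk : g ≠ k) (hg₁ : g ∈ G1.image f₁) (hk₁ : k ∈ G1.image f₁)
    (hg₂ : g ∈ G2.image f₂) (hk₂ : k ∈ G2.image f₂) {δ : ℝ} (hδ : 0 ≤ δ)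
    (hy : ∀ h, 2 * δ ≤ y (f₁ h) h ∧ 2 * δ ≤ y (f₂ h) h)
    (hw : ∀ j, ∑ h, y j h + 2 * δ ≤ w ∨ (j ∈ univ.image f₁ ∧ j ∈ univ.image f₂))
    (hx : ∀ j ∈ ({g, k} : Finset J), δ ≤ x1 j ∧ δ ≤ x2 j)
    (hr : ∀ j, j ≠ g → j ≠ k → x1 j + x2 j + 2 * δ ≤ r) :
    FeasibleS G1 G2 b a1 a2 (y - columnIndicator f₁ δ - columnIndicator f₂ δ)
      (x1 - (Pi.single g δ + Pi.single k δ)) (x2 - (Pi.single g δ + Pi.single k δ))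
      (r - 2 * δ) (w - 2 * δ) := by
  obtain ⟨hG1, hG2, hjob, hyb, hx1s, hx2s, hxr, hx1b, hx2b, hrow1, hrow2⟩ := hS
  have hite (s : Finset J) (j : J) :
      0 ≤ (if j ∈ s then δ else 0) ∧ (if j ∈ s then δ else 0) ≤ δ := by
    split_ifs <;> simp [hδ]
  have hxg := hx g (by simp)
  have hxk := hx k (by simp)
  refine ⟨fun h hh => ?_, fun h hh => ?_, fun j => ?_, fun j h => ?_, ?_, ?_, fun j => ?_,
    fun j => ?_, fun j => ?_, fun j => ?_, fun j => ?_⟩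
  · rw [sum_sub_two_columnIndicator_jobs]; constructor <;> linarith [hG1 h hh]
  · rw [sum_sub_two_columnIndicator_jobs]; constructor <;> linarith [hG2 h hh]
  · rw [sum_sub_two_columnIndicator_machines y hf₁ hf₂]
    rcases hw j with hj | ⟨hj₁, hj₂⟩
    · linarith [(hite (univ.image f₁) j).1, (hite (univ.image f₂) j).1]
    · simp only [hj₁, hj₂, if_true]; linarith [hjob j]
  · simp only [Pi.sub_apply, columnIndicator]
    have := hyb j h
    split_ifs with h₁ h₂ <;> (try subst j) <;> constructor <;> linarith [hy h]
  · rw [sum_sub_single_add_single, hx1s]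
  · rw [sum_sub_single_add_single, hx2s]
  · rw [Pi.sub_apply, Pi.sub_apply, single_add_single_apply hgk]
    split_ifs with hj
    · linarith [hxr j]
    · rw [not_or] at hj
      linarith [hr j hj.1 hj.2]
  · have := sub_single_add_single_mem_Icc hgk (fun j => (hx1b j).1) hxg.1 hxk.1 hδ j
    constructor <;> linarith [this.1, this.2, hx1b j]
  · have := sub_single_add_single_mem_Icc hgk (fun j => (hx2b j).1) hxg.2 hxk.2 hδ j
    constructor <;> linarith [this.1, this.2, hx2b j]
  · have := ite_mem_add_single_add_single_le
      (notMem_image_of_mem_image_of_disjoint hf₂ hdisj hg₂)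
      (notMem_image_of_mem_image_of_disjoint hf₂ hdisj hk₂) hgk hδ j
    have hrow := hrow1 j
    rw [sum_sub_distrib] at hrow ⊢
    rw [sum_sub_two_columnIndicator_machines y hf₁ hf₂, Pi.sub_apply]
    linarith [(hite (G1.image f₁) j).2]
  · have := ite_mem_add_single_add_single_le
      (notMem_image_of_mem_image_of_disjoint hf₁ hdisj.symm hg₁)
      (notMem_image_of_mem_image_of_disjoint hf₁ hdisj.symm hk₁) hgk hδ j
    have hrow := hrow2 j
    rw [sum_sub_distrib] at hrow ⊢
    rw [sum_sub_two_columnIndicator_machines y hf₁ hf₂, Pi.sub_apply]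
    linarith [(hite (G2.image f₂) j).2]

theorem FeasibleS.exists_pos_sub_two_columns (hS : FeasibleS G1 G2 b a1 a2 y x1 x2 r w)
    (hdisj : Disjoint G1 G2)
    {f₁ f₂ : M → J} (hf₁ : IsColumn y w f₁) (hf₂ : IsColumn y w f₂)
    {g k : J} (hgk : g ≠ k) (hg₁ : g ∈ G1.image f₁) (hk₁ : k ∈ G1.image f₁)
    (hg₂ : g ∈ G2.image f₂) (hk₂ : k ∈ G2.image f₂)
    (hx : ∀ j ∈ ({g, k} : Finset J), 0 < x1 j ∧ 0 < x2 j)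
    {E : ℝ} (hE : 0 < E) (hr : ∀ j, j ≠ g → j ≠ k → x1 j + x2 j + E ≤ r) :
    ∃ δ > 0, 2 * δ ≤ E ∧
      FeasibleS G1 G2 b a1 a2 (y - columnIndicator f₁ δ - columnIndicator f₂ δ)
        (x1 - (Pi.single g δ + Pi.single k δ)) (x2 - (Pi.single g δ + Pi.single k δ))
        (r - 2 * δ) (w - 2 * δ) := by
  obtain ⟨inj₁, pos₁, cov₁⟩ := hf₁
  obtain ⟨inj₂, pos₂, cov₂⟩ := hf₂
  -- a tight job is covered by both columns, so only the other jobs constrain `δ`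
  have hjobs (j : J) : ∀ᶠ δ in 𝓝[>] (0 : ℝ),
      ∑ h, y j h + 2 * δ ≤ w ∨ (j ∈ univ.image f₁ ∧ j ∈ univ.image f₂) := by
    rcases (hS.2.2.1 j).eq_or_lt with htight | hlt
    · exact .of_forall fun _ => .inr ⟨by simpa using cov₁ j htight, by simpa using cov₂ j htight⟩
    · exact (eventually_nhdsGT_two_mul_le (sub_pos.2 hlt)).mono fun δ hδ => .inl (by linarith)
  obtain ⟨δ, hδ : 0 < δ, hδE, hy, hw, hxδ⟩ := (eventually_mem_nhdsWithin.and <|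
    (eventually_nhdsGT_two_mul_le hE).and <|
    (eventually_all.2 fun h =>
      (eventually_nhdsGT_two_mul_le (pos₁ h)).and (eventually_nhdsGT_two_mul_le (pos₂ h))).and <|
    (eventually_all.2 hjobs).and <|
    (eventually_all_finset _).2 fun j hj => nhdsWithin_le_nhds <|
      (eventually_le_nhds (hx j hj).1).and (eventually_le_nhds (hx j hj).2)).exists
  exact ⟨δ, hδ, hδE, hS.sub_two_columns hdisj inj₁ inj₂ hgk hg₁ hk₁ hg₂ hk₂ hδ.le hy hw hxδ
    fun j hjg hjk => by linarith [hr j hjg hjk]⟩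

end Perturbation

section EpsR

variable {J : Type*} [DecidableEq J] {B1 B2 : Finset J} {x1 x2 : J → ℝ} {r ε : ℝ} {g k : J}

lemma epsR_le_eps : epsR B1 B2 x1 x2 r ε g k ≤ ε := by
  unfold epsR
  split_ifs
  · exact min_le_right _ _
  · exact le_rfl

lemma epsR_le_sub_of_mem {j : J} (hj : j ∈ (B1 ∪ B2) \ {g, k}) :
    epsR B1 B2 x1 x2 r ε g k ≤ r - (x1 j + x2 j) := by
  rw [epsR, dif_pos ⟨j, hj⟩]
  exact (min_le_left _ _).trans (inf'_le _ hj)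

/-- A job outside `B1 ∪ B2` has integral load, hence slack at least `ε ≥ epsR`. -/
lemma add_epsR_le (hB1 : ∀ j ∉ B1, ∃ z : ℤ, x1 j = z) (hB2 : ∀ j ∉ B2, ∃ z : ℤ, x2 j = z)
    {n : ℤ} (hr : r = n + ε) (hε1 : ε < 1) {j : J} (hjg : j ≠ g) (hjk : j ≠ k)
    (hx : x1 j + x2 j ≤ r) : x1 j + x2 j + epsR B1 B2 x1 x2 r ε g k ≤ r := by
  have hε : epsR B1 B2 x1 x2 r ε g k ≤ ε := epsR_le_eps
  by_cases hj : j ∈ B1 ∪ B2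
  · have : epsR B1 B2 x1 x2 r ε g k ≤ r - (x1 j + x2 j) :=
      epsR_le_sub_of_mem (mem_sdiff.2 ⟨hj, by simp [hjg, hjk]⟩)
    linarith
  · rw [mem_union, not_or] at hj
    obtain ⟨z₁, hz₁⟩ := hB1 j hj.1
    obtain ⟨z₂, hz₂⟩ := hB2 j hj.2
    have hz : z₁ + z₂ ≤ n := Int.le_of_lt_add_one <| by
      exact_mod_cast (by push_cast; linarith : ((z₁ + z₂ : ℤ) : ℝ) < n + 1)
    have : x1 j + x2 j ≤ n := by rw [hz₁, hz₂]; exact_mod_cast hz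
    linarith

end EpsR

theorem no_pair_of_full_columns_two_jobs_general
    {J M : Type*} [Fintype J] [Fintype M] [DecidableEq J]
    (G1 G2 : Finset M)
    (hdisj : Disjoint G1 G2)
    (b : J → M → ℕ) (a1 a2 : J → ℕ)
    (rstar wstar : ℝ)
    (y : J → M → ℝ) (x1 x2 : J → ℝ) (r w : ℝ)
    (hfeas : FeasibleLP G1 G2 b a1 a2 rstar wstar y x1 x2 r w)
    (hopt : ∀ y' x1' x2' r' w',
      FeasibleLP G1 G2 b a1 a2 rstar wstar y' x1' x2' r' w' → r ≤ r')
    (ε : ℝ) (hε1 : ε < 1) (hrε : r = (⌊rstar⌋ : ℝ) + ε)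
    (B1 B2 : Finset J)
    (hB1 : ∀ j, j ∈ B1 ↔ ¬∃ z : ℤ, x1 j = (z : ℝ))
    (hB2 : ∀ j, j ∈ B2 ↔ ¬∃ z : ℤ, x2 j = (z : ℝ))
    (cols : Finset (M → J)) (mult : (M → J) → ℝ)
    (hrep : IsColRep y w cols mult)
    (g k : J) (hgk : g ≠ k)
    (hxg : 0 < x1 g * x2 g) (hxk : 0 < x1 k * x2 k)
    (hepsr : 0 < epsR B1 B2 x1 x2 r ε g k) :
    (¬ ∃ f ∈ cols, (∃ h ∈ G1, f h = g) ∧ (∃ h ∈ G1, f h = k)) ∨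
    (¬ ∃ f ∈ cols, (∃ h ∈ G2, f h = k) ∧ (∃ h ∈ G2, f h = g)) := by
  by_contra! ⟨⟨f₁, hf₁, ⟨h₁, hh₁, hg₁⟩, h₁', hh₁', hk₁⟩,
    f₂, hf₂, ⟨h₂, hh₂, hk₂⟩, h₂', hh₂', hg₂⟩
  obtain ⟨-, -, -, -, -, -, hxr, hx1, hx2, -, -⟩ := hfeas.1
  obtain ⟨hS, hwr, -⟩ := hfeas
  have hslack (j : J) (hjg : j ≠ g) (hjk : j ≠ k) : x1 j + x2 j + epsR B1 B2 x1 x2 r ε g k ≤ r :=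
    add_epsR_le (fun j hj => not_not.1 (mt (hB1 j).2 hj)) (fun j hj => not_not.1 (mt (hB2 j).2 hj))
      hrε hε1 hjg hjk (hxr j)
  have hxpos : ∀ j ∈ ({g, k} : Finset J), 0 < x1 j ∧ 0 < x2 j := by
    have hpos {j : J} (hj : 0 < x1 j * x2 j) : 0 < x1 j ∧ 0 < x2 j :=
      ⟨pos_of_mul_pos_left hj (hx2 j).1, pos_of_mul_pos_right hj (hx1 j).1⟩
    simpa using ⟨hpos hxg, hpos hxk⟩
  obtain ⟨δ, hδ, hδE, hS'⟩ := hS.exists_pos_sub_two_columns hdisj (hrep.1 f₁ hf₁).1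
    (hrep.1 f₂ hf₂).1 hgk (hg₁ ▸ mem_image_of_mem f₁ hh₁) (hk₁ ▸ mem_image_of_mem f₁ hh₁')
    (hg₂ ▸ mem_image_of_mem f₂ hh₂') (hk₂ ▸ mem_image_of_mem f₂ hh₂) hxpos hepsr hslack
  have hEε : epsR B1 B2 x1 x2 r ε g k ≤ ε := epsR_le_eps
  have := hopt _ _ _ _ _ ⟨hS', by linarith, by linarith⟩
  linarith

theorem no_pair_of_full_columns_two_jobs
    {J M : Type*} [Fintype J] [Fintype M] [DecidableEq J] [DecidableEq M]
    (G1 G2 : Finset M) (hG1ne : G1.Nonempty) (hG2ne : G2.Nonempty)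
    (hdisj : Disjoint G1 G2) (hcover : G1 ∪ G2 = Finset.univ)
    (b : J → M → ℕ) (a1 a2 : J → ℕ)
    (ystar : J → M → ℝ) (x1star x2star : J → ℝ) (rstar wstar : ℝ)
    (hstar : FeasibleS G1 G2 b a1 a2 ystar x1star x2star rstar wstar)
    (hstaropt : ∀ y' x1' x2' r' w', FeasibleS G1 G2 b a1 a2 y' x1' x2' r' w' →
      wstar - rstar ≤ w' - r')
    (y : J → M → ℝ) (x1 x2 : J → ℝ) (r w : ℝ)
    (hfeas : FeasibleLP G1 G2 b a1 a2 rstar wstar y x1 x2 r w)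
    (hopt : ∀ y' x1' x2' r' w',
      FeasibleLP G1 G2 b a1 a2 rstar wstar y' x1' x2' r' w' → r ≤ r')
    (ε : ℝ) (hε0 : 0 < ε) (hε1 : ε < 1) (hrε : r = (⌊rstar⌋ : ℝ) + ε)
    (B1 B2 : Finset J)
    (hB1 : ∀ j, j ∈ B1 ↔ ¬∃ z : ℤ, x1 j = (z : ℝ))
    (hB2 : ∀ j, j ∈ B2 ↔ ¬∃ z : ℤ, x2 j = (z : ℝ))
    (cols : Finset (M → J)) (mult : (M → J) → ℝ)
    (hrep : IsColRep y w cols mult)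
    (g k : J) (hgk : g ≠ k)
    (hxg : 0 < x1 g * x2 g) (hxk : 0 < x1 k * x2 k)
    (hepsr : 0 < epsR B1 B2 x1 x2 r ε g k) :
    (¬ ∃ f ∈ cols, (∃ h ∈ G1, f h = g) ∧ (∃ h ∈ G1, f h = k)) ∨
    (¬ ∃ f ∈ cols, (∃ h ∈ G2, f h = k) ∧ (∃ h ∈ G2, f h = g)) :=
  no_pair_of_full_columns_two_jobs_general G1 G2 hdisj b a1 a2 rstar wstar y x1 x2 r w hfeas hopt ε
    hε1 hrε B1 B2 hB1 hB2 cols mult hrep g k hgk hxg hxk hepsr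
end
end
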